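/- In a normed plane, c_D(‖·‖) = 1 if and only if Birkhoff orthogonality is a symmetric relation (i.e., the plane is a Radon plane). -/

import Mathlib

open Module

variable {V : Type*} [NormedAddCommGroup V] [NormedSpace ℝ V]

noncomputable def sine {V : Type*} [NormedAddCommGroup V] [NormedSpace ℝ V] (x y : V) : ℝ :=
  ⨅ t : ℝ, ‖x + t • y‖

def BOrth {V : Type*} [NormedAddCommGroup V] [NormedSpace ℝ V] (x y : V) : Prop :=
  ∀ t : ℝ, ‖x‖ ≤ ‖x + t • y‖

noncomputable def cD (V : Type*) [NormedAddCommGroup V] [NormedSpace ℝ V] : ℝ :=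
  sInf {r : ℝ | ∃ x y : V, ‖x‖ = 1 ∧ ‖y‖ = 1 ∧ BOrth x y ∧ r = sine y x}

noncomputable def cR (V : Type*) [NormedAddCommGroup V] [NormedSpace ℝ V] : ℝ :=
  sSup {r : ℝ | ∃ x y : V, ‖x‖ = 1 ∧ ‖y‖ = 1 ∧ r = |sine x y - sine y x|}

/-!
Normalising, Birkhoff orthogonality reduces to unit vectors, and for unit `y` the relation
`y ⊣_B x` says exactly `1 ≤ s(y, x)`. Since always `s(y, x) ≤ ‖y‖ = 1`, the constant `c_D` is at
most `1`, and it equals `1` iff `y ⊣_B x` for every unit pair with `x ⊣_B y`, i.e. iff the plane is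
Radon. Unit pairs with `x ⊣_B y` exist once the dimension is at least two (otherwise `c_D` would
be `sInf ∅ = 0`): normalise `y` and a point of a line `x + ℝ y` nearest to the origin.
-/

open Filter

lemma bddBelow_range_norm_add_smul (x y : V) : BddBelow (Set.range fun t : ℝ => ‖x + t • y‖) :=
  ⟨0, by rintro r ⟨t, rfl⟩; exact norm_nonneg _⟩

lemma sine_nonneg (x y : V) : 0 ≤ sine x y :=
  Real.iInf_nonneg fun _ => norm_nonneg _

lemma sine_le_norm (x y : V) : sine x y ≤ ‖x‖ :=
  (ciInf_le (bddBelow_range_norm_add_smul x y) 0).trans_eq (by simp)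

lemma bOrth_iff_norm_le_sine {x y : V} : BOrth x y ↔ ‖x‖ ≤ sine x y :=
  (le_ciInf_iff (bddBelow_range_norm_add_smul x y)).symm

lemma bOrth_zero_left (y : V) : BOrth 0 y := fun _ => by simp

lemma bOrth_zero_right (x : V) : BOrth x 0 := fun _ => by simp

lemma BOrth.smul_right {x y : V} (h : BOrth x y) (b : ℝ) : BOrth x (b • y) := fun t => by
  simpa [smul_smul] using h (t * b)

lemma BOrth.smul_left {x y : V} (h : BOrth x y) (a : ℝ) : BOrth (a • x) y := by
  rcases eq_or_ne a 0 with rfl | ha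
  · simpa using bOrth_zero_left y
  intro t
  have hfactor : a • x + t • y = a • (x + (t / a) • y) := by
    rw [smul_add, smul_smul, mul_div_cancel₀ t ha]
  rw [hfactor, norm_smul, norm_smul]
  exact mul_le_mul_of_nonneg_left (h (t / a)) (norm_nonneg a)

lemma BOrth.smul {x y : V} (h : BOrth x y) (a b : ℝ) : BOrth (a • x) (b • y) :=
  (h.smul_left a).smul_right b

lemma bOrth_symm_iff_forall_norm_eq_one :
    (∀ x y : V, BOrth x y → BOrth y x) ↔
      ∀ x y : V, ‖x‖ = 1 → ‖y‖ = 1 → BOrth x y → BOrth y x := by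
  refine ⟨fun h x y _ _ => h x y, fun h x y hxy => ?_⟩
  rcases eq_or_ne x 0 with rfl | hx
  · exact bOrth_zero_right y
  rcases eq_or_ne y 0 with rfl | hy
  · exact bOrth_zero_left x
  have hunit := h (‖x‖⁻¹ • x) (‖y‖⁻¹ • y) (norm_smul_inv_norm hx) (norm_smul_inv_norm hy)
    (hxy.smul _ _)
  simpa [smul_smul, hx, hy] using hunit.smul ‖y‖ ‖x‖

lemma tendsto_norm_add_smul_cocompact (x : V) {y : V} (hy : y ≠ 0) :
    Tendsto (fun t : ℝ => ‖x + t • y‖) (cocompact ℝ) atTop := by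
  have hlin : Tendsto (fun t : ℝ => ‖y‖ * ‖t‖ - ‖x‖) (cocompact ℝ) atTop :=
    tendsto_atTop_add_const_right _ _
      (tendsto_norm_cocompact_atTop.const_mul_atTop (norm_pos_iff.2 hy))
  refine tendsto_atTop_mono (fun t => ?_) hlin
  have htri := norm_sub_le (x + t • y) x
  rw [add_sub_cancel_left, norm_smul, mul_comm] at htri
  linarith

lemma exists_bOrth_add_smul (x : V) {y : V} (hy : y ≠ 0) : ∃ t : ℝ, BOrth (x + t • y) y := by
  have hcont : Continuous fun t : ℝ => ‖x + t • y‖ := by fun_prop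
  obtain ⟨t₀, ht₀⟩ := hcont.exists_forall_le (tendsto_norm_add_smul_cocompact x hy)
  exact ⟨t₀, fun t => by simpa [add_assoc, add_smul] using ht₀ (t₀ + t)⟩

lemma exists_norm_eq_one_bOrth (h : 1 < Module.rank ℝ V) :
    ∃ x y : V, ‖x‖ = 1 ∧ ‖y‖ = 1 ∧ BOrth x y := by
  obtain ⟨x, hx⟩ := rank_pos_iff_exists_ne_zero.1 (zero_lt_one.trans h)
  obtain ⟨y, hxy⟩ := exists_linearIndependent_pair_of_one_lt_rank h hx
  have hy : y ≠ 0 := hxy.ne_zero 1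
  obtain ⟨t, ht⟩ := exists_bOrth_add_smul x hy
  have hz : x + t • y ≠ 0 := fun hz =>
    one_ne_zero (LinearIndependent.pair_iff.1 hxy 1 t (by rwa [one_smul])).1
  exact ⟨_, _, norm_smul_inv_norm hz, norm_smul_inv_norm hy, ht.smul _ _⟩

lemma bddBelow_sine_of_bOrth :
    BddBelow {r : ℝ | ∃ x y : V, ‖x‖ = 1 ∧ ‖y‖ = 1 ∧ BOrth x y ∧ r = sine y x} := by
  refine ⟨0, ?_⟩
  rintro r ⟨x, y, -, -, -, rfl⟩
  exact sine_nonneg y x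

lemma le_cD_iff (h : 1 < Module.rank ℝ V) {a : ℝ} :
    a ≤ cD V ↔ ∀ x y : V, ‖x‖ = 1 → ‖y‖ = 1 → BOrth x y → a ≤ sine y x := by
  obtain ⟨x, y, hx, hy, hxy⟩ := exists_norm_eq_one_bOrth h
  rw [cD, le_csInf_iff bddBelow_sine_of_bOrth ⟨_, x, y, hx, hy, hxy, rfl⟩]
  grind

lemma cD_le_one (h : 1 < Module.rank ℝ V) : cD V ≤ 1 := by
  obtain ⟨x, y, hx, hy, hxy⟩ := exists_norm_eq_one_bOrth h
  exact (csInf_le bddBelow_sine_of_bOrth ⟨x, y, hx, hy, hxy, rfl⟩).trans (hy ▸ sine_le_norm y x)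

theorem cD_eq_one_iff_radon (hV : finrank ℝ V = 2) :
    cD V = 1 ↔ ∀ x y : V, BOrth x y → BOrth y x := by
  have h : 1 < Module.rank ℝ V := one_lt_rank_of_one_lt_finrank (by omega)
  rw [bOrth_symm_iff_forall_norm_eq_one, ← (cD_le_one h).ge_iff_eq, le_cD_iff h]
  refine forall₂_congr fun x y => forall₂_congr fun _ hy => imp_congr_right fun _ => ?_
  rw [bOrth_iff_norm_le_sine, hy]
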